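/- arXiv:2412.02777 — 10 statements merged into one kernel-verified Lean document; each statement's English description precedes it below -/
import Mathlib

section
/- Let E_1,...,E_n be subsets of a finite set Ω and let C ⊆ [0,1]^n be the set of coherent credence vectors (those q for which there exists a probability measure P on Ω with P(E_i) = q_i for all i). Suppose ℓ_1,...,ℓ_n : [0,1]×[0,1] → [0,∞] are each lower semi-continuous and strictly convex when finite in the first argument, with ℓ_i(p,q) = 0 iff p = q, and let L(p,q) = Σ_i ℓ_i(p_i, q_i). If there exists p ∈ C with L(p,q) < ∞, then there exists a unique p* ∈ C minimizing L(·,q) over C; moreover p* = q iff q ∈ C. -/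
/-!
The coherent vectors form the image of the probability simplex under a linear map, so `C` is
compact and convex. The loss `L(·, q)` is lower semicontinuous, hence attains its minimum on `C`,
and that minimum is finite. Strict convexity between points of finite loss rules out two distinct
minimizers. Finally `L(p, q) = 0` exactly when `p = q`, so the minimum is `0`, attained at `q`,
precisely when `q ∈ C`.
-/

open scoped ENNReal
open Set

theorem ENNReal.sum_lt_sum_of_le_of_exists_lt {ι : Type*} {s : Finset ι} {f g : ι → ℝ≥0∞}
    (hg : ∀ i ∈ s, g i ≠ ⊤) (hle : ∀ i ∈ s, f i ≤ g i) (hlt : ∃ i ∈ s, f i < g i) :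
    ∑ i ∈ s, f i < ∑ i ∈ s, g i := by
  classical
  obtain ⟨j, hj, hfg⟩ := hlt
  have hle' : ∑ i ∈ s.erase j, f i ≤ ∑ i ∈ s.erase j, g i :=
    Finset.sum_le_sum fun i hi => hle i (Finset.mem_of_mem_erase hi)
  have hfin : ∑ i ∈ s.erase j, g i ≠ ⊤ :=
    ENNReal.sum_ne_top.mpr fun i hi => hg i (Finset.mem_of_mem_erase hi)
  rw [← Finset.sum_erase_add s f hj, ← Finset.sum_erase_add s g hj]
  exact ENNReal.add_lt_add_of_le_of_lt (ne_top_of_le_ne_top hfin hle') hle' hfg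

theorem ENNReal.ofReal_mul_add_ofReal_one_sub_mul {t : ℝ} (ht : t ∈ Icc 0 1) (x : ℝ≥0∞) :
    ENNReal.ofReal t * x + ENNReal.ofReal (1 - t) * x = x := by
  rw [← add_mul, ← ENNReal.ofReal_add ht.1 (sub_nonneg.mpr ht.2)]
  simp

section Coherence

variable {ι Ω : Type*}

def coherenceMap (E : ι → Finset Ω) : (Ω → ℝ) →ₗ[ℝ] (ι → ℝ) :=
  LinearMap.pi fun i => ∑ ω ∈ E i, LinearMap.proj ω

@[simp]
theorem coherenceMap_apply (E : ι → Finset Ω) (π : Ω → ℝ) (i : ι) :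
    coherenceMap E π i = ∑ ω ∈ E i, π ω := by
  simp [coherenceMap]

variable [Fintype Ω]

def coherentSet (E : ι → Finset Ω) : Set (ι → ℝ) :=
  coherenceMap E '' stdSimplex ℝ Ω

theorem isCompact_coherentSet (E : ι → Finset Ω) : IsCompact (coherentSet E) :=
  (isCompact_stdSimplex ℝ Ω).image (LinearMap.continuous_of_finiteDimensional _)

theorem convex_coherentSet (E : ι → Finset Ω) : Convex ℝ (coherentSet E) :=
  (convex_stdSimplex ℝ Ω).linear_image _

theorem coherentSet_subset_pi_Icc (E : ι → Finset Ω) :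
    coherentSet E ⊆ univ.pi fun _ => Icc 0 1 := by
  rintro _ ⟨π, ⟨hπ₀, hπ₁⟩, rfl⟩ i -
  rw [coherenceMap_apply]
  refine ⟨Finset.sum_nonneg fun ω _ => hπ₀ ω, hπ₁ ▸ ?_⟩
  exact Finset.sum_le_sum_of_subset_of_nonneg (Finset.subset_univ _) fun ω _ _ => hπ₀ ω

theorem setOf_coherent_eq_coherentSet (E : ι → Finset Ω) :
    {q : ι → ℝ | (∀ i, q i ∈ Icc (0:ℝ) 1) ∧
      ∃ π : Ω → ℝ, (∀ ω, 0 ≤ π ω) ∧ (∑ ω, π ω) = 1 ∧ ∀ i, (∑ ω ∈ E i, π ω) = q i}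
      = coherentSet E := by
  ext q
  constructor
  · rintro ⟨-, π, hπ₀, hπ₁, hπE⟩
    exact ⟨π, ⟨hπ₀, hπ₁⟩, funext fun i => by simpa using hπE i⟩
  · intro hq
    obtain ⟨π, ⟨hπ₀, hπ₁⟩, rfl⟩ := hq
    exact ⟨fun i => coherentSet_subset_pi_Icc E ⟨π, ⟨hπ₀, hπ₁⟩, rfl⟩ i trivial,
      π, hπ₀, hπ₁, fun i => (coherenceMap_apply E π i).symm⟩

end Coherence

section StrictConvexity

variable {E : Type*} [AddCommGroup E] [Module ℝ E]

def StrictConvexOnWhereFinite (s : Set E) (f : E → ℝ≥0∞) : Prop :=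
  ∀ ⦃a⦄, a ∈ s → ∀ ⦃b⦄, b ∈ s → a ≠ b → f a ≠ ⊤ → f b ≠ ⊤ → ∀ ⦃t : ℝ⦄, t ∈ Ioo 0 1 →
    f (t • a + (1 - t) • b) < ENNReal.ofReal t * f a + ENNReal.ofReal (1 - t) * f b

theorem StrictConvexOnWhereFinite.of_lt_or_eq_top {s : Set E} {f : E → ℝ≥0∞}
    (hf : ∀ a ∈ s, ∀ b ∈ s, a ≠ b → ∀ t ∈ Ioo (0:ℝ) 1,
      f (t • a + (1 - t) • b) < ENNReal.ofReal t * f a + ENNReal.ofReal (1 - t) * f b ∨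
        (f (t • a + (1 - t) • b) = ⊤ ∧
          ENNReal.ofReal t * f a + ENNReal.ofReal (1 - t) * f b = ⊤)) :
    StrictConvexOnWhereFinite s f := by
  intro a ha b hb hab hfa hfb t ht
  refine (hf a ha b hb hab t ht).resolve_right fun h => ?_
  exact ENNReal.add_ne_top.mpr ⟨ENNReal.mul_ne_top ENNReal.ofReal_ne_top hfa,
    ENNReal.mul_ne_top ENNReal.ofReal_ne_top hfb⟩ h.2

theorem StrictConvexOnWhereFinite.mono {s t : Set E} {f : E → ℝ≥0∞}
    (hf : StrictConvexOnWhereFinite t f) (hst : s ⊆ t) : StrictConvexOnWhereFinite s f :=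
  fun _ ha _ hb => hf (hst ha) (hst hb)

/-- The midpoint of two distinct minimizers would do strictly better. -/
theorem StrictConvexOnWhereFinite.eq_of_isMinOn {s : Set E} {f : E → ℝ≥0∞} {a b : E}
    (hf : StrictConvexOnWhereFinite s f) (hs : Convex ℝ s) (ha : a ∈ s) (hb : b ∈ s)
    (hfa : IsMinOn f s a) (hfb : IsMinOn f s b) (hfin : f a ≠ ⊤) : a = b := by
  by_contra hab
  have hba : f b = f a := le_antisymm (hfb ha) (hfa hb)
  have hhalf : (1 / 2 : ℝ) ∈ Ioo 0 1 := by norm_num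
  have hmid := hs ha hb hhalf.1.le (sub_nonneg.mpr hhalf.2.le) (add_sub_cancel _ _)
  have hlt := hf ha hb hab hfin (hba ▸ hfin) hhalf
  rw [hba, ENNReal.ofReal_mul_add_ofReal_one_sub_mul (Ioo_subset_Icc_self hhalf)] at hlt
  exact (hfa hmid).not_gt hlt

variable {ι : Type*} [Fintype ι]

theorem StrictConvexOnWhereFinite.sum_apply {s : ι → Set ℝ} {f : ι → ℝ → ℝ≥0∞}
    (hf : ∀ i, StrictConvexOnWhereFinite (s i) (f i)) :
    StrictConvexOnWhereFinite (univ.pi s) fun p => ∑ i, f i (p i) := by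
  intro a ha b hb hab hfa hfb t ht
  have hfa' : ∀ i, f i (a i) ≠ ⊤ := fun i => ENNReal.sum_ne_top.mp hfa i (Finset.mem_univ i)
  have hfb' : ∀ i, f i (b i) ≠ ⊤ := fun i => ENNReal.sum_ne_top.mp hfb i (Finset.mem_univ i)
  have hcoord : ∀ i, a i ≠ b i → f i (t * a i + (1 - t) * b i)
      < ENNReal.ofReal t * f i (a i) + ENNReal.ofReal (1 - t) * f i (b i) :=
    fun i hi => hf i (ha i trivial) (hb i trivial) hi (hfa' i) (hfb' i) ht
  simp only [Pi.add_apply, Pi.smul_apply, smul_eq_mul, Finset.mul_sum, ← Finset.sum_add_distrib]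
  refine ENNReal.sum_lt_sum_of_le_of_exists_lt
    (fun i _ => ENNReal.add_ne_top.mpr ⟨ENNReal.mul_ne_top ENNReal.ofReal_ne_top (hfa' i),
      ENNReal.mul_ne_top ENNReal.ofReal_ne_top (hfb' i)⟩) (fun i _ => ?_) ?_
  · by_cases hi : a i = b i
    · rw [hi, ← add_mul, add_sub_cancel, one_mul,
        ENNReal.ofReal_mul_add_ofReal_one_sub_mul (Ioo_subset_Icc_self ht)]
    · exact (hcoord i hi).le
  · obtain ⟨i, hi⟩ := Function.ne_iff.mp hab
    exact ⟨i, Finset.mem_univ i, hcoord i hi⟩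

end StrictConvexity

theorem lowerSemicontinuousOn_sum_apply {ι : Type*} [Fintype ι] {s : ι → Set ℝ}
    {f : ι → ℝ → ℝ≥0∞} (hf : ∀ i, LowerSemicontinuousOn (f i) (s i)) :
    LowerSemicontinuousOn (fun p : ι → ℝ => ∑ i, f i (p i)) (univ.pi s) :=
  lowerSemicontinuousOn_sum fun i _ =>
    (hf i).comp (continuous_apply i).continuousOn fun _ hp => hp i trivial

/-- existence and uniqueness of the coherent minimizer of an additive loss
built from dissimilarity functions (lower semicontinuous, strictly convex when finite,
vanishing exactly on the diagonal), given that some coherent point has finite loss. -/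
theorem exists_unique_coherent_minimizer
    {n : ℕ} {Ω : Type*} [Fintype Ω] (E : Fin n → Finset Ω)
    (C : Set (Fin n → ℝ))
    (hC : C = {q | (∀ i, q i ∈ Set.Icc (0:ℝ) 1) ∧
      ∃ π : Ω → ℝ, (∀ ω, 0 ≤ π ω) ∧ (∑ ω, π ω) = 1 ∧ ∀ i, (∑ ω ∈ E i, π ω) = q i})
    (ℓ : Fin n → ℝ → ℝ → ℝ≥0∞)
    (hlsc : ∀ i q, q ∈ Set.Icc (0:ℝ) 1 →
      LowerSemicontinuousOn (fun p => ℓ i p q) (Set.Icc (0:ℝ) 1))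
    (hconv : ∀ i q, q ∈ Set.Icc (0:ℝ) 1 → ∀ p ∈ Set.Icc (0:ℝ) 1, ∀ p' ∈ Set.Icc (0:ℝ) 1,
      p ≠ p' → ∀ t ∈ Set.Ioo (0:ℝ) 1,
        ℓ i (t * p + (1 - t) * p') q
            < ENNReal.ofReal t * ℓ i p q + ENNReal.ofReal (1 - t) * ℓ i p' q
        ∨ (ℓ i (t * p + (1 - t) * p') q = ⊤ ∧
            ENNReal.ofReal t * ℓ i p q + ENNReal.ofReal (1 - t) * ℓ i p' q = ⊤))
    (hzero : ∀ i, ∀ p ∈ Set.Icc (0:ℝ) 1, ∀ q ∈ Set.Icc (0:ℝ) 1, (ℓ i p q = 0 ↔ p = q))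
    (q : Fin n → ℝ) (hq : ∀ i, q i ∈ Set.Icc (0:ℝ) 1)
    (hfin : ∃ p ∈ C, (∑ i, ℓ i (p i) (q i)) < ⊤) :
    ∃ pstar ∈ C,
      (∀ p ∈ C, (∑ i, ℓ i (pstar i) (q i)) ≤ ∑ i, ℓ i (p i) (q i)) ∧
      (∀ p' ∈ C, (∀ p ∈ C, (∑ i, ℓ i (p' i) (q i)) ≤ ∑ i, ℓ i (p i) (q i)) → p' = pstar) ∧
      (pstar = q ↔ q ∈ C) := by
  rw [setOf_coherent_eq_coherentSet] at hC
  subst hC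
  obtain ⟨p₀, hp₀, hp₀fin⟩ := hfin
  set L : (Fin n → ℝ) → ℝ≥0∞ := fun p => ∑ i, ℓ i (p i) (q i)
  have hsub := coherentSet_subset_pi_Icc E
  have hLlsc : LowerSemicontinuousOn L (coherentSet E) :=
    (lowerSemicontinuousOn_sum_apply fun i => hlsc i (q i) (hq i)).mono hsub
  have hLconv : StrictConvexOnWhereFinite (coherentSet E) L :=
    (StrictConvexOnWhereFinite.sum_apply fun i =>
      StrictConvexOnWhereFinite.of_lt_or_eq_top (hconv i (q i) (hq i))).mono hsub
  obtain ⟨pstar, hps, hmin⟩ := hLlsc.exists_isMinOn ⟨p₀, hp₀⟩ (isCompact_coherentSet E)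
  have hmin_fin : L pstar ≠ ⊤ := ((hmin hp₀).trans_lt hp₀fin).ne
  refine ⟨pstar, hps, fun p hp => hmin hp, fun p' hp' hmin' => ?_,
    fun h => h ▸ hps, fun hqC => ?_⟩
  · exact (hLconv.eq_of_isMinOn (convex_coherentSet E) hps hp' hmin hmin' hmin_fin).symm
  · have hLq : L q = 0 := Finset.sum_eq_zero fun i _ => (hzero i _ (hq i) _ (hq i)).mpr rfl
    have hLps : L pstar = 0 := le_antisymm (hLq ▸ hmin hqC) bot_le
    funext i
    exact (hzero i _ (hsub hps i trivial) _ (hq i)).mp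
      (Finset.sum_eq_zero_iff.mp hLps i (Finset.mem_univ i))
end

section
/- Let V be the n×N event matrix and V̄ the (n+1)×N matrix obtained by appending a row of all ones; let q̄ ∈ ℝ^{n+1} extend q by the entry 1. Then the credence base (V, q) is coherent if and only if for every a ∈ ℝ^{n+1} with V̄^T a ≥ 0 (entrywise), one has a · q̄ ≥ 0. -/
open scoped BigOperators

def Coherent {n N : ℕ} (V : Fin n → Fin N → ℝ) (q : Fin n → ℝ) : Prop :=
  ∃ π : Fin N → ℝ, (∀ j, 0 ≤ π j) ∧ (∑ j, π j) = 1 ∧ ∀ i, (∑ j, V i j * π j) = q i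

/-!
A credence vector is coherent exactly when it lies in the convex hull of the columns of `V`,
i.e. of the indicator vectors of the atoms. One direction is that every affine half-space
containing the columns contains their convex hull; the other is the separation of a point from
the (compact) convex hull of finitely many points by a hyperplane, whose normal vector is the
Dutch book `a` and whose offset gives `a₀`.
-/

open Set

theorem convexHull_range_eq_image_stdSimplex {κ E : Type*} [Fintype κ] [AddCommGroup E]
    [Module ℝ E] (v : κ → E) :
    convexHull ℝ (range v) = Fintype.linearCombination ℝ v '' stdSimplex ℝ κ := by
  classical
  rw [← convexHull_rangle_single_eq_stdSimplex, LinearMap.image_convexHull, ← range_comp]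
  congr 2
  ext j : 1
  simp [Fintype.linearCombination_apply, Pi.single_apply]

theorem coherent_iff_mem_convexHull {n N : ℕ} (V : Fin n → Fin N → ℝ) (q : Fin n → ℝ) :
    Coherent V q ↔ q ∈ convexHull ℝ (range fun j i ↦ V i j) := by
  rw [convexHull_range_eq_image_stdSimplex]
  refine exists_congr fun π ↦ ?_
  simp only [stdSimplex, mem_ofPred_eq, and_assoc, funext_iff, Fintype.linearCombination_apply,
    Finset.sum_apply, Pi.smul_apply, smul_eq_mul, mul_comm (π _)]

theorem StrongDual.apply_eq_dotProduct {ι : Type*} [Fintype ι] [DecidableEq ι]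
    (f : StrongDual ℝ (ι → ℝ)) (x : ι → ℝ) :
    f x = (fun i ↦ f (Pi.single i 1)) ⬝ᵥ x := by
  conv_lhs => rw [pi_eq_sum_univ' x, map_sum]
  simp [dotProduct, mul_comm]

theorem mem_convexHull_range_iff_forall_dotProduct {ι κ : Type*} [Fintype ι] [Finite κ]
    (v : κ → ι → ℝ) (x : ι → ℝ) :
    x ∈ convexHull ℝ (range v) ↔
      ∀ (a : ι → ℝ) (a₀ : ℝ), (∀ j, 0 ≤ a ⬝ᵥ v j + a₀) → 0 ≤ a ⬝ᵥ x + a₀ := by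
  classical
  constructor
  · intro hx a a₀ hv
    have hlin : IsLinearMap ℝ (a ⬝ᵥ ·) := ⟨dotProduct_add a, fun c y ↦ dotProduct_smul c a y⟩
    have hsub : convexHull ℝ (range v) ⊆ {y | -a₀ ≤ a ⬝ᵥ y} :=
      convexHull_min (range_subset_iff.2 fun j ↦ neg_le_iff_add_nonneg.2 (hv j))
        (convex_halfSpace_ge hlin _)
    exact neg_le_iff_add_nonneg.1 (hsub hx)
  · contrapose!
    intro hx
    obtain ⟨f, u, hfx, hf⟩ := geometric_hahn_banach_point_closed (convex_convexHull ℝ _)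
      ((finite_range v).isClosed_convexHull ℝ) hx
    refine ⟨fun i ↦ f (Pi.single i 1), -u, fun j ↦ ?_, ?_⟩
    · have := hf (v j) (subset_convexHull ℝ _ (mem_range_self j))
      rw [f.apply_eq_dotProduct] at this
      linarith
    · rw [f.apply_eq_dotProduct] at hfx
      linarith

theorem coherent_iff_no_dutch_book_general
    {n N : ℕ} (V : Fin n → Fin N → ℝ)
    (q : Fin n → ℝ) :
    Coherent V q ↔
      ∀ (a : Fin n → ℝ) (a₀ : ℝ),
        (∀ j, 0 ≤ (∑ i, a i * V i j) + a₀) → 0 ≤ (∑ i, a i * q i) + a₀ := by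
  rw [coherent_iff_mem_convexHull, mem_convexHull_range_iff_forall_dotProduct]
  rfl

/-- Dutch Book theorem: `(V, q)` is coherent iff every vector
`(a, a₀) ∈ ℝ^{n+1}` with `V̄ᵀ (a, a₀) ≥ 0` entrywise satisfies `(a, a₀) · (q, 1) ≥ 0`,
where `V̄` is `V` with a row of ones appended and `q̄` is `q` with the entry `1` appended. -/
theorem coherent_iff_no_dutch_book
    {n N : ℕ} (V : Fin n → Fin N → ℝ)
    (hV : ∀ i j, V i j = 0 ∨ V i j = 1)
    (q : Fin n → ℝ) (hq : ∀ i, q i ∈ Set.Icc (0:ℝ) 1) :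
    Coherent V q ↔
      ∀ (a : Fin n → ℝ) (a₀ : ℝ),
        (∀ j, 0 ≤ (∑ i, a i * V i j) + a₀) → 0 ≤ (∑ i, a i * q i) + a₀ :=
  coherent_iff_no_dutch_book_general V q
end

section
/- Suppose V̄^T a = 0 for some nonzero a ∈ ℝ^{n+1} with q̄ · a = 0, and a_i ≠ 0 for some 1 ≤ i ≤ n. Let (W, r) be obtained from (V, q) by deleting the i-th row of V and the i-th entry of q. Then (W, r) is coherent if and only if (V, q) is coherent. -/
open scoped BigOperators

/-- if `V̄ᵀ (a, a₀) = 0` for a nonzero `(a, a₀)` with `(a, a₀) · (q, 1) = 0`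
and `a i₀ ≠ 0` for some event index `i₀`, then deleting the `i₀`-th row of `V` and the
`i₀`-th entry of `q` yields a credence base `(W, r)` that is coherent iff `(V, q)` is. -/
theorem coherent_iff_coherent_of_row_removal
    {n N : ℕ} (V : Fin (n + 1) → Fin N → ℝ)
    (hV : ∀ i j, V i j = 0 ∨ V i j = 1)
    (q : Fin (n + 1) → ℝ) (hq : ∀ i, q i ∈ Set.Icc (0:ℝ) 1)
    (a : Fin (n + 1) → ℝ) (a₀ : ℝ)
    (hker : ∀ j, (∑ i, a i * V i j) + a₀ = 0)
    (hdot : (∑ i, a i * q i) + a₀ = 0)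
    (i₀ : Fin (n + 1)) (hi₀ : a i₀ ≠ 0) :
    Coherent (fun i j => V (i₀.succAbove i) j) (fun i => q (i₀.succAbove i)) ↔
      Coherent V q := by
  constructor
  · rintro ⟨π, hpos, hsum, hrow⟩
    refine ⟨π, hpos, hsum, ?_⟩
    set g : Fin (n + 1) → ℝ := fun i => (∑ j, V i j * π j) - q i with hg
    have hgs : ∀ i : Fin n, g (i₀.succAbove i) = 0 := by
      intro i; simp [hg, hrow i]
    have hsum0 : ∑ i, a i * g i = 0 := by
      have h1 : ∑ i, a i * g i
          = (∑ j, (∑ i, a i * V i j) * π j) - ∑ i, a i * q i := by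
        simp only [hg, mul_sub, Finset.mul_sum, Finset.sum_sub_distrib,
          Finset.sum_mul, mul_assoc]
        rw [Finset.sum_comm]
      rw [h1]
      have h2 : ∑ j, (∑ i, a i * V i j) * π j = ∑ j, (-a₀) * π j := by
        apply Finset.sum_congr rfl; intro j _
        have := hker j; have : (∑ i, a i * V i j) = -a₀ := by linarith
        rw [this]
      rw [h2, ← Finset.mul_sum, hsum]
      linarith
    have hsplit : ∑ i, a i * g i = a i₀ * g i₀ + ∑ i, a (i₀.succAbove i) * g (i₀.succAbove i) :=
      Fin.sum_univ_succAbove (fun i => a i * g i) i₀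
    have : a i₀ * g i₀ = 0 := by
      have : ∑ i : Fin n, a (i₀.succAbove i) * g (i₀.succAbove i) = 0 := by
        apply Finset.sum_eq_zero; intro i _; rw [hgs i, mul_zero]
      rw [hsplit, this] at hsum0; linarith
    have hg0 : g i₀ = 0 := by
      rcases mul_eq_zero.mp this with h | h
      · exact absurd h hi₀
      · exact h
    intro i
    rcases eq_or_ne i i₀ with rfl | hne
    · have := hg0; simp [hg] at this; linarith
    · obtain ⟨k, hk⟩ := Fin.exists_succAbove_eq hne
      rw [← hk]; exact hrow k
  · rintro ⟨π, hpos, hsum, hrow⟩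
    exact ⟨π, hpos, hsum, fun i => hrow _⟩
end

section
/- Let V̄ have rank n+1 and let Q : rowspan(V̄) → ℝ be the linear functional defined by Q(V̄^T a) = a · q̄. Let B be a positive spanning set of rowspan(V̄) ∩ ℝ_{≥0}^N, i.e., every element of this cone is a finite nonnegative combination of elements of B. Then (V, q) is coherent if and only if Q(b) ≥ 0 for all b ∈ B. -/
open scoped BigOperators

/-- `B` is a positive spanning set of `S`: `B ⊆ S` and every element of `S` is a finite
nonnegative linear combination of elements of `B`. -/
def IsPosSpanning {N : ℕ} (B S : Set (Fin N → ℝ)) : Prop :=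
  B ⊆ S ∧ ∀ s ∈ S, ∃ (m : ℕ) (c : Fin m → ℝ) (b : Fin m → (Fin N → ℝ)),
    (∀ k, b k ∈ B) ∧ (∀ k, 0 ≤ c k) ∧ s = ∑ k, c k • b k

/-!
Coherence says that `q̄ = V̄ π` for some `π ≥ 0` (the row of ones forces `∑ π = 1`). By Farkas'
lemma this holds iff `a · q̄ ≥ 0` whenever `V̄ᵀ a ≥ 0`, i.e. iff `Q ≥ 0` on the cone
`rowspan(V̄) ∩ ℝ₊^N`. As the rows of `V̄` are independent, `a` is determined by `V̄ᵀ a`, so `Q`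
is linear on the cone and its sign there is decided on a positive spanning set.

Because of the row of ones, the nonnegative `π` with `V̄ π = q̄` are exactly the points of the
simplex, so Farkas' lemma reduces to separating `q̄` from the compact convex set `V̄(Δ)`; no
closedness of finitely generated cones is needed.
-/

open Matrix

theorem coherent_iff_exists_nonneg_mulVec_eq {n N : ℕ} (V : Fin n → Fin N → ℝ) (q : Fin n → ℝ) :
    Coherent V q ↔
      ∃ π : Fin N → ℝ, 0 ≤ π ∧ of (Fin.cons 1 V) *ᵥ π = Fin.cons 1 q := by
  simp only [Coherent, funext_iff, Fin.forall_fin_succ, mulVec, dotProduct, of_apply, Fin.cons_zero,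
    Fin.cons_succ, Pi.one_apply, one_mul, Pi.le_def, Pi.zero_apply]

namespace Matrix

variable {m ι : Type*} [Fintype m] [Fintype ι] {M : Matrix m ι ℝ} {p : m → ℝ}

theorem dotProduct_nonneg_of_mulVec_eq {π : ι → ℝ} (hπ : 0 ≤ π) (hMπ : M *ᵥ π = p) {a : m → ℝ}
    (ha : 0 ≤ a ᵥ* M) : 0 ≤ a ⬝ᵥ p := by
  rw [← hMπ, dotProduct_mulVec]
  exact dotProduct_nonneg_of_nonneg ha hπ

theorem exists_dotProduct_eq_sub_mul (f : StrongDual ℝ (m → ℝ)) (u : ℝ) (i₀ : m) :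
    ∃ a : m → ℝ, ∀ x, a ⬝ᵥ x = f x - u * x i₀ := by
  classical
  refine ⟨(dotProductEquiv ℝ m).symm f.toLinearMap - u • Pi.single i₀ 1, fun x => ?_⟩
  rw [sub_dotProduct, smul_dotProduct, single_one_dotProduct, smul_eq_mul,
    ← dotProductEquiv_apply_apply, LinearEquiv.apply_symm_apply, ContinuousLinearMap.coe_coe]

theorem exists_mem_stdSimplex_mulVec_eq {i₀ : m} (hM : M i₀ = 1) (hp : p i₀ = 1)
    (hdual : ∀ a, 0 ≤ a ᵥ* M → 0 ≤ a ⬝ᵥ p) : ∃ π ∈ stdSimplex ℝ ι, M *ᵥ π = p := by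
  classical
  by_contra hnot
  have hK : IsCompact (M.mulVecLin '' stdSimplex ℝ ι) :=
    (isCompact_stdSimplex ℝ ι).image M.mulVecLin.continuous_of_finiteDimensional
  obtain ⟨f, u, hfp, hfK⟩ := geometric_hahn_banach_point_closed
    ((convex_stdSimplex ℝ ι).linear_image _) hK.isClosed (by simpa using hnot)
  -- `a` is the normal of the separating hyperplane, made homogeneous using row `i₀` of `M`.
  obtain ⟨a, ha⟩ := exists_dotProduct_eq_sub_mul f u i₀
  have hcol : 0 ≤ a ᵥ* M := fun j => by
    have hfj := hfK _ ⟨_, single_mem_stdSimplex ℝ j, rfl⟩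
    rw [mulVecLin_apply, mulVec_single_one] at hfj
    rw [Pi.zero_apply, ← dotProduct_single_one (a ᵥ* M), ← dotProduct_mulVec, mulVec_single_one,
      ha, col_apply, hM, Pi.one_apply, mul_one, sub_nonneg]
    exact hfj.le
  have hap := hdual a hcol
  rw [ha, hp] at hap
  linarith

theorem exists_nonneg_mulVec_eq_iff {i₀ : m} (hM : M i₀ = 1) (hp : p i₀ = 1) :
    (∃ π, 0 ≤ π ∧ M *ᵥ π = p) ↔ ∀ a, 0 ≤ a ᵥ* M → 0 ≤ a ⬝ᵥ p :=
  ⟨fun ⟨_, hπ, hMπ⟩ _ ha => dotProduct_nonneg_of_mulVec_eq hπ hMπ ha, fun h =>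
    let ⟨π, hπ, hMπ⟩ := exists_mem_stdSimplex_mulVec_eq hM hp h
    ⟨π, hπ.1, hMπ⟩⟩

end Matrix

theorem IsPosSpanning.forall_dotProduct_nonneg_iff {ι : Type*} [Fintype ι] {N : ℕ}
    {v : ι → Fin N → ℝ} (hv : LinearIndependent ℝ v) (w : ι → ℝ) {B : Set (Fin N → ℝ)}
    (hB : IsPosSpanning B {o | o ∈ Submodule.span ℝ (Set.range v) ∧ ∀ j, 0 ≤ o j}) :
    (∀ b ∈ B, ∀ a : ι → ℝ, ∑ i, a i • v i = b → 0 ≤ a ⬝ᵥ w) ↔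
      ∀ a : ι → ℝ, 0 ≤ a ᵥ* of v → 0 ≤ a ⬝ᵥ w := by
  refine ⟨fun h a ha => ?_, fun h b hb a hab =>
    h a (by rw [vecMul_eq_sum]; exact hab ▸ (hB.1 hb).2)⟩
  rw [vecMul_eq_sum] at ha
  have hspan : ∑ i, a i • v i ∈ Submodule.span ℝ (Set.range v) :=
    (Submodule.mem_span_range_iff_exists_fun ℝ).2 ⟨a, rfl⟩
  obtain ⟨m, c, b, hbB, hc, hab⟩ := hB.2 _ ⟨hspan, ha⟩
  choose A hA using fun k => (Submodule.mem_span_range_iff_exists_fun ℝ).1 (hB.1 (hbB k)).1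
  have hdecomp : a = ∑ k, c k • A k := by
    apply hv.fintypeLinearCombination_injective
    simp only [map_sum, map_smul, Fintype.linearCombination_apply, hA, hab]
  rw [hdecomp, sum_dotProduct]
  exact Finset.sum_nonneg fun k _ => by
    rw [smul_dotProduct]; exact mul_nonneg (hc k) (h _ (hbB k) _ (hA k))

theorem coherent_iff_nonneg_on_pos_spanning_set_general
    {n N : ℕ} (V : Fin n → Fin N → ℝ)
    (q : Fin n → ℝ)
    (Vbar : Fin (n + 1) → Fin N → ℝ) (hVbar : Vbar = Fin.cons (fun _ => (1:ℝ)) V)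
    (qbar : Fin (n + 1) → ℝ) (hqbar : qbar = Fin.cons (1:ℝ) q)
    (hrank : LinearIndependent ℝ Vbar)
    (B : Set (Fin N → ℝ))
    (hB : IsPosSpanning B
      {o | o ∈ Submodule.span ℝ (Set.range Vbar) ∧ ∀ j, 0 ≤ o j}) :
    Coherent V q ↔
      ∀ b ∈ B, ∀ a : Fin (n + 1) → ℝ,
        (∑ i, a i • Vbar i) = b → 0 ≤ ∑ i, a i * qbar i := by
  subst hVbar hqbar
  rw [coherent_iff_exists_nonneg_mulVec_eq, exists_nonneg_mulVec_eq_iff (i₀ := 0) rfl rfl]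
  exact (hB.forall_dotProduct_nonneg_iff hrank _).symm

/-- when `V̄` (the matrix `V` with a row of ones prepended) has linearly
independent rows, and `B` is a positive spanning set of `rowspan(V̄) ∩ ℝ₊^N`, coherence of
`(V, q)` is equivalent to `Q(b) ≥ 0` for all `b ∈ B`, where `Q(V̄ᵀ a) = a · q̄`. -/
theorem coherent_iff_nonneg_on_pos_spanning_set
    {n N : ℕ} (V : Fin n → Fin N → ℝ)
    (hV : ∀ i j, V i j = 0 ∨ V i j = 1)
    (q : Fin n → ℝ) (hq : ∀ i, q i ∈ Set.Icc (0:ℝ) 1)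
    (Vbar : Fin (n + 1) → Fin N → ℝ) (hVbar : Vbar = Fin.cons (fun _ => (1:ℝ)) V)
    (qbar : Fin (n + 1) → ℝ) (hqbar : qbar = Fin.cons (1:ℝ) q)
    (hrank : LinearIndependent ℝ Vbar)
    (B : Set (Fin N → ℝ))
    (hB : IsPosSpanning B
      {o | o ∈ Submodule.span ℝ (Set.range Vbar) ∧ ∀ j, 0 ≤ o j}) :
    Coherent V q ↔
      ∀ b ∈ B, ∀ a : Fin (n + 1) → ℝ,
        (∑ i, a i • Vbar i) = b → 0 ≤ ∑ i, a i * qbar i :=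
  coherent_iff_nonneg_on_pos_spanning_set_general V q Vbar hVbar qbar hqbar hrank B hB
end

section
/- Let S = rowspan(V̄) ∩ ℝ_{≥0}^N where V̄ has full row rank. A vector o ∈ S is extremal (meaning: every v ∈ S with v ≤ o entrywise is a scalar multiple of o) if and only if o is maximally-zero in rowspan(V̄), meaning there is no nonzero w ∈ rowspan(V̄) whose zero set strictly contains the zero set of o. -/
/-!
If `Z(o) ⊊ Z(w)` for some nonzero `w` in the span, then `o ± ε w ≥ 0` for small `ε > 0`, and
`v = (o - ε w) / 2` lies below `o` without being proportional to it: at an index where `w`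
vanishes and `o` does not, `v` equals `o / 2`, forcing the ratio `1/2`, and then `w = 0`.
Conversely, if `0 ≤ v ≤ o` then `Z(o) ⊆ Z(v)`; subtracting the multiple of `o` that agrees with
`v` at one index of the support of `v` enlarges the zero set strictly unless the result is `0`.
-/

open Filter Topology

variable {ι : Type*}

def zeroSet (v : ι → ℝ) : Set ι := {j | v j = 0}

def IsMaximallyZero (P : Submodule ℝ (ι → ℝ)) (o : ι → ℝ) : Prop :=
  ¬ ∃ w ∈ P, w ≠ 0 ∧ zeroSet o ⊂ zeroSet w

def IsExtremal (P : Submodule ℝ (ι → ℝ)) (o : ι → ℝ) : Prop :=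
  ∀ v : ι → ℝ, (v ∈ P ∧ ∀ j, 0 ≤ v j) → (∀ j, v j ≤ o j) → ∃ lam : ℝ, v = lam • o

theorem zeroSet_subset_zeroSet_of_nonneg_of_le {o v : ι → ℝ} (hv : ∀ j, 0 ≤ v j)
    (hvo : ∀ j, v j ≤ o j) : zeroSet o ⊆ zeroSet v :=
  fun j (hj : o j = 0) => le_antisymm (hj ▸ hvo j) (hv j)

theorem exists_pos_forall_abs_mul_le [Finite ι] {o w : ι → ℝ} (ho : ∀ j, 0 ≤ o j)
    (how : zeroSet o ⊆ zeroSet w) : ∃ ε > 0, ∀ j, |ε * w j| ≤ o j := by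
  have small : ∀ j, ∀ᶠ ε in 𝓝[>] (0 : ℝ), |ε * w j| ≤ o j := by
    intro j
    rcases (ho j).eq_or_lt with hoj | hoj
    · have hwj : w j = 0 := how hoj.symm
      simp [hwj, ← hoj]
    · have hlim : Tendsto (fun ε : ℝ => |ε * w j|) (𝓝 0) (𝓝 0) := by
        simpa using (continuous_id.mul continuous_const).abs.tendsto (0 : ℝ)
      exact (hlim.mono_left nhdsWithin_le_nhds).eventually (eventually_le_nhds hoj)
  exact (eventually_mem_nhdsWithin.and (eventually_all.2 small)).exists

theorem IsExtremal.isMaximallyZero [Finite ι] {P : Submodule ℝ (ι → ℝ)} {o : ι → ℝ}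
    (hoP : o ∈ P) (ho : ∀ j, 0 ≤ o j) (hext : IsExtremal P o) : IsMaximallyZero P o := by
  rintro ⟨w, hwP, hw0, how⟩
  obtain ⟨j₀, hwj₀, hoj₀⟩ := Set.exists_of_ssubset how
  obtain ⟨ε, hε, hεw⟩ := exists_pos_forall_abs_mul_le ho how.subset
  have hbounds : ∀ j, -o j ≤ ε * w j ∧ ε * w j ≤ o j := fun j => abs_le.1 (hεw j)
  obtain ⟨lam, hlam⟩ := hext ((1 / 2 : ℝ) • (o - ε • w))
    ⟨P.smul_mem _ (P.sub_mem hoP (P.smul_mem _ hwP)), fun j => by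
      simp only [Pi.smul_apply, Pi.sub_apply, smul_eq_mul]; linarith [hbounds j]⟩
    (fun j => by simp only [Pi.smul_apply, Pi.sub_apply, smul_eq_mul]; linarith [hbounds j])
  have hcoord : ∀ j, (1 / 2) * (o j - ε * w j) = lam * o j := fun j => by
    simpa using congrFun hlam j
  have hlam_half : lam = 1 / 2 := by
    have h := hcoord j₀
    rw [show w j₀ = 0 from hwj₀] at h
    exact mul_right_cancel₀ hoj₀ (by linarith : lam * o j₀ = 1 / 2 * o j₀)
  refine hw0 (funext fun j => ?_)
  have h := hcoord j
  rw [hlam_half] at h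
  exact (mul_eq_zero.1 (by linarith : ε * w j = 0)).resolve_left hε.ne'

theorem IsMaximallyZero.exists_eq_smul_of_zeroSet_subset {P : Submodule ℝ (ι → ℝ)}
    {o v : ι → ℝ} (hmax : IsMaximallyZero P o) (hoP : o ∈ P) (hvP : v ∈ P)
    (hov : zeroSet o ⊆ zeroSet v) : ∃ lam : ℝ, v = lam • o := by
  by_cases hv0 : v = 0
  · exact ⟨0, by simp [hv0]⟩
  obtain ⟨j₁, hvj₁⟩ := Function.ne_iff.1 hv0
  have hoj₁ : o j₁ ≠ 0 := fun h => hvj₁ (hov h)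
  refine ⟨v j₁ / o j₁, sub_eq_zero.1 ?_⟩
  by_contra hw0
  refine hmax ⟨v - (v j₁ / o j₁) • o, P.sub_mem hvP (P.smul_mem _ hoP), hw0, ?_⟩
  refine (Set.ssubset_iff_of_subset fun j (hj : o j = 0) => ?_).2 ⟨j₁, ?_, hoj₁⟩
  · have hvj : v j = 0 := hov hj
    simp [zeroSet, hvj, hj]
  · simp [zeroSet, hoj₁]

theorem IsMaximallyZero.isExtremal {P : Submodule ℝ (ι → ℝ)} {o : ι → ℝ} (hoP : o ∈ P)
    (hmax : IsMaximallyZero P o) : IsExtremal P o := fun _ ⟨hvP, hv⟩ hvo =>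
  hmax.exists_eq_smul_of_zeroSet_subset hoP hvP (zeroSet_subset_zeroSet_of_nonneg_of_le hv hvo)

theorem isExtremal_iff_isMaximallyZero [Finite ι] {P : Submodule ℝ (ι → ℝ)} {o : ι → ℝ}
    (hoP : o ∈ P) (ho : ∀ j, 0 ≤ o j) : IsExtremal P o ↔ IsMaximallyZero P o :=
  ⟨IsExtremal.isMaximallyZero hoP ho, IsMaximallyZero.isExtremal hoP⟩

theorem extremal_iff_maximallyZero_general
    {m N : ℕ} (M : Fin m → Fin N → ℝ)
    (o : Fin N → ℝ)
    (ho : o ∈ Submodule.span ℝ (Set.range M) ∧ ∀ j, 0 ≤ o j) :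
    (∀ v : Fin N → ℝ,
        (v ∈ Submodule.span ℝ (Set.range M) ∧ ∀ j, 0 ≤ v j) →
        (∀ j, v j ≤ o j) → ∃ lam : ℝ, v = lam • o)
    ↔ ¬ ∃ w : Fin N → ℝ, w ∈ Submodule.span ℝ (Set.range M) ∧ w ≠ 0 ∧
        {j | o j = 0} ⊂ {j | w j = 0} :=
  isExtremal_iff_isMaximallyZero ho.1 ho.2

/-- in the cone `S = rowspan(V̄) ∩ ℝ₊^N` (for `V̄` of full row rank), a vector
`o ∈ S` is extremal (every `v ∈ S` with `v ≤ o` entrywise is a scalar multiple of `o`)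
iff `o` is maximally-zero in `rowspan(V̄)` (no nonzero `w` in the row span has a zero set
strictly containing that of `o`). -/
theorem extremal_iff_maximallyZero
    {m N : ℕ} (M : Fin m → Fin N → ℝ)
    (hrank : LinearIndependent ℝ M)
    (o : Fin N → ℝ)
    (ho : o ∈ Submodule.span ℝ (Set.range M) ∧ ∀ j, 0 ≤ o j) :
    (∀ v : Fin N → ℝ,
        (v ∈ Submodule.span ℝ (Set.range M) ∧ ∀ j, 0 ≤ v j) →
        (∀ j, v j ≤ o j) → ∃ lam : ℝ, v = lam • o)
    ↔ ¬ ∃ w : Fin N → ℝ, w ∈ Submodule.span ℝ (Set.range M) ∧ w ≠ 0 ∧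
        {j | o j = 0} ⊂ {j | w j = 0} :=
  extremal_iff_maximallyZero_general M o ho
end

section
/- For the partition scenario where E_i = {ω_i} for i = 1,...,n over Ω = {ω_1,...,ω_n}, and the loss L(p,q) = Σ_i f(p_i, q_i) with f the binary KL divergence f(p,q) = p ln(p/q) + (1−p) ln((1−p)/(1−q)), the minimizer p* over the coherent set (the probability simplex) satisfies: ln(p*_i/(1−p*_i)) − ln(q_i/(1−q_i)) is independent of i, provided all q_i ∈ (0,1). -/
open scoped BigOperators

/-- Binary KL divergence `f(p,q) = p ln(p/q) + (1−p) ln((1−p)/(1−q))`. -/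
noncomputable def binKL (p q : ℝ) : ℝ :=
  p * Real.log (p / q) + (1 - p) * Real.log ((1 - p) / (1 - q))

/-! Moving mass `t` from coordinate `j` to coordinate `i` stays in the simplex as long as both
coordinates remain nonnegative, so `t = 0` minimizes `t ↦ f(p*ᵢ + t, qᵢ) + f(p*ⱼ - t, qⱼ)` over the
admissible `t`. Since `∂f/∂p (p, q) = logit p - logit q`, where `logit x = ln (x / (1 - x))`, the
vanishing of this derivative at an interior minimizer says that the shifts `logit p*ᵢ - logit qᵢ`
agree. The minimizer is interior: if `p*ᵢ = 0`, the derivative tends to `-∞` as `t → 0⁺`, because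
`logit t → -∞`, so a small transfer into `i` strictly decreases the loss. -/

open Filter Set Topology Real

lemma continuous_mul_log_div (c : ℝ) : Continuous fun x : ℝ => x * log (x / c) := by
  rcases eq_or_ne c 0 with rfl | hc
  · simpa using continuous_const
  · have h : (fun x : ℝ => x * log (x / c)) = fun x => c * (x / c * log (x / c)) := by
      funext x; field_simp
    rw [h]
    exact continuous_const.mul (continuous_mul_log.comp (continuous_id.div_const c))

lemma continuous_binKL_left (q : ℝ) : Continuous fun p => binKL p q :=
  (continuous_mul_log_div q).add
    ((continuous_mul_log_div (1 - q)).comp (continuous_const.sub continuous_id))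

lemma hasDerivAt_binKL_left {p q : ℝ} (hp₀ : p ≠ 0) (hp₁ : p ≠ 1) (hq₀ : q ≠ 0) (hq₁ : q ≠ 1) :
    HasDerivAt (fun x => binKL x q) (log (p / (1 - p)) - log (q / (1 - q))) p := by
  have hp₁' : 1 - p ≠ 0 := sub_ne_zero.2 hp₁.symm
  have hq₁' : 1 - q ≠ 0 := sub_ne_zero.2 hq₁.symm
  have hlin : HasDerivAt (fun x : ℝ => 1 - x) (-1) p := (hasDerivAt_id' p).const_sub 1
  have h₁ : HasDerivAt (fun x => x * log (x / q)) (log (p / q) + 1) p :=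
    ((hasDerivAt_id' p).fun_mul (((hasDerivAt_id' p).div_const q).log
      (div_ne_zero hp₀ hq₀))).congr_deriv (by field_simp)
  have h₂ : HasDerivAt (fun x => (1 - x) * log ((1 - x) / (1 - q)))
      (-(log ((1 - p) / (1 - q)) + 1)) p :=
    (hlin.fun_mul ((hlin.div_const (1 - q)).log (div_ne_zero hp₁' hq₁'))).congr_deriv
      (by field_simp; ring)
  refine (h₁.add h₂).congr_deriv ?_
  rw [log_div hp₀ hp₁', log_div hq₀ hq₁', log_div hp₀ hq₀, log_div hp₁' hq₁']
  ring

lemma HasDerivAt.add_comp_transfer {f g : ℝ → ℝ} {f' g' x y t : ℝ} (hf : HasDerivAt f f' (x + t))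
    (hg : HasDerivAt g g' (y - t)) :
    HasDerivAt (fun s => f (x + s) + g (y - s)) (f' - g') t :=
  ((hf.comp t ((hasDerivAt_id' t).const_add x)).add
    (hg.comp t ((hasDerivAt_id' t).const_sub y))).congr_deriv (by ring)

lemma eventually_nhdsGT_lt_of_hasDerivAt_neg {f f' : ℝ → ℝ} {x : ℝ}
    (hf : ContinuousWithinAt f (Ici x) x) (hf' : ∀ᶠ t in 𝓝[>] x, HasDerivAt f (f' t) t ∧ f' t < 0) :
    ∀ᶠ t in 𝓝[>] x, f t < f x := by
  obtain ⟨u, hu, hsub⟩ := mem_nhdsGT_iff_exists_Ioo_subset.mp hf'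
  filter_upwards [Ioo_mem_nhdsGT hu] with t ht
  have hcont : ContinuousOn f (Icc x t) := by
    intro y hy
    rcases hy.1.eq_or_lt with rfl | hxy
    · exact hf.mono Icc_subset_Ici_self
    · exact (hsub ⟨hxy, hy.2.trans_lt ht.2⟩).1.continuousAt.continuousWithinAt
  obtain ⟨c, hc, hslope⟩ := exists_hasDerivAt_eq_slope f f' ht.1 hcont
    fun c hc => (hsub ⟨hc.1, hc.2.trans ht.2⟩).1
  have hneg : (f t - f x) / (t - x) < 0 := hslope ▸ (hsub ⟨hc.1, hc.2.trans ht.2⟩).2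
  rw [div_lt_iff₀ (sub_pos.2 ht.1), zero_mul] at hneg
  linarith

lemma tendsto_log_odds_sub_log_odds_nhdsGT_zero {a : ℝ} (ha₀ : 0 < a) (ha₁ : a ≤ 1) :
    Tendsto (fun t => log (t / (1 - t)) - log ((a - t) / (1 - (a - t)))) (𝓝[>] 0) atBot := by
  have hlim : Tendsto (fun t => log t + (-log (1 - t) - log (a - t))) (𝓝[>] 0) atBot := by
    refine tendsto_log_nhdsGT_zero.atBot_add (C := -log (1 - 0) - log (a - 0)) ?_
    refine ContinuousAt.tendsto ?_ |>.mono_left nhdsWithin_le_nhds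
    fun_prop (disch := simp [ha₀.ne'])
  refine tendsto_atBot_mono' _ ?_ hlim
  filter_upwards [Ioo_mem_nhdsGT ha₀] with t ht
  have h₁ : 1 - t ≠ 0 := by linarith [ht.2]
  have h₂ : 1 - (a - t) ≠ 0 := by linarith [ht.1]
  rw [log_div ht.1.ne' h₁, log_div (sub_pos.2 ht.2).ne' h₂]
  have : log (1 - (a - t)) ≤ 0 := log_nonpos (by linarith [ht.1]) (by linarith [ht.2])
  linarith

lemma IsMinOn.add_le_add_of_transfer {ι : Type*} [Fintype ι] {F : ι → ℝ → ℝ}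
    {p : ι → ℝ} (hmin : IsMinOn (fun x : ι → ℝ => ∑ k, F k (x k)) (stdSimplex ℝ ι) p)
    (hp : p ∈ stdSimplex ℝ ι) {i j : ι} (hij : i ≠ j) {t : ℝ} (hi : 0 ≤ p i + t)
    (hj : 0 ≤ p j - t) :
    F i (p i) + F j (p j) ≤ F i (p i + t) + F j (p j - t) := by
  classical
  set p' : ι → ℝ := fun k => if k = i then p i + t else if k = j then p j - t else p k
  have hp'i : p' i = p i + t := if_pos rfl
  have hp'j : p' j = p j - t := by simp [p', hij.symm]
  have hp'k : ∀ k, k ≠ i ∧ k ≠ j → p' k = p k := fun k hk => by simp [p', hk.1, hk.2]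
  have hdiff : ∀ g : ι → ℝ → ℝ, ∑ k, (g k (p' k) - g k (p k)) =
      (g i (p i + t) - g i (p i)) + (g j (p j - t) - g j (p j)) := fun g => by
    rw [Fintype.sum_eq_add i j hij fun k hk => by rw [hp'k k hk, sub_self], hp'i, hp'j]
  have hp' : p' ∈ stdSimplex ℝ ι := by
    refine ⟨fun k => ?_, ?_⟩
    · by_cases hki : k = i
      · subst hki; rwa [hp'i]
      by_cases hkj : k = j
      · subst hkj; rwa [hp'j]
      rw [hp'k k ⟨hki, hkj⟩]; exact hp.1 k
    · have := hdiff fun _ x => x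
      simp only [Finset.sum_sub_distrib, hp.2] at this
      linarith
  have := hdiff F
  rw [Finset.sum_sub_distrib] at this
  linarith [isMinOn_iff.mp hmin p' hp']

lemma pos_of_isMinOn_sum_binKL {ι : Type*} [Fintype ι] {q : ι → ℝ}
    (hq : ∀ k, q k ∈ Ioo (0 : ℝ) 1) {p : ι → ℝ}
    (hmin : IsMinOn (fun x : ι → ℝ => ∑ k, binKL (x k) (q k)) (stdSimplex ℝ ι) p)
    (hp : p ∈ stdSimplex ℝ ι) (i : ι) : 0 < p i := by
  refine (hp.1 i).lt_of_ne' fun hi => ?_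
  obtain ⟨j, -, hj⟩ : ∃ j ∈ Finset.univ, (0 : ℝ) < p j :=
    Finset.exists_lt_of_sum_lt (by simp [hp.2])
  have hij : i ≠ j := by rintro rfl; linarith
  have hj₁ : p j ≤ 1 := hp.2 ▸ Finset.single_le_sum (fun k _ => hp.1 k) (Finset.mem_univ j)
  set h : ℝ → ℝ := fun t => binKL (p i + t) (q i) + binKL (p j - t) (q j)
  have hle : ∀ t ∈ Icc 0 (p j), h 0 ≤ h t := fun t ht => by
    simpa [h] using hmin.add_le_add_of_transfer (F := fun k x => binKL x (q k)) hp hij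
      (by linarith [ht.1]) (by linarith [ht.2])
  set c := log (q j / (1 - q j)) - log (q i / (1 - q i))
  have hderiv : ∀ t ∈ Ioo 0 (p j), HasDerivAt h
      (log (t / (1 - t)) - log ((p j - t) / (1 - (p j - t))) + c) t := fun t ht => by
    have hi' : p i + t = t := by rw [hi, zero_add]
    have hf := hasDerivAt_binKL_left (q := q i) (p := p i + t) (by rw [hi']; exact ht.1.ne')
      (by rw [hi']; linarith [ht.2]) (hq i).1.ne' (hq i).2.ne
    have hg := hasDerivAt_binKL_left (q := q j) (p := p j - t) (by linarith [ht.2])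
      (by linarith [ht.1]) (hq j).1.ne' (hq j).2.ne
    refine (hf.add_comp_transfer hg).congr_deriv ?_
    rw [hi']
    ring
  have hcont : ContinuousWithinAt h (Ici 0) 0 :=
    (((continuous_binKL_left _).comp (continuous_const_add _)).add
      ((continuous_binKL_left _).comp (continuous_sub_left _))).continuousWithinAt
  have hdec : ∀ᶠ t in 𝓝[>] 0, h t < h 0 := by
    refine eventually_nhdsGT_lt_of_hasDerivAt_neg hcont
      (f' := fun t => log (t / (1 - t)) - log ((p j - t) / (1 - (p j - t))) + c) ?_
    filter_upwards [Ioo_mem_nhdsGT hj, (tendsto_atBot_add_const_right _ c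
      (tendsto_log_odds_sub_log_odds_nhdsGT_zero hj hj₁)).eventually_lt_atBot 0] with t ht hneg
    exact ⟨hderiv t ht, hneg⟩
  obtain ⟨t, hlt, ht⟩ := (hdec.and (Ioo_mem_nhdsGT hj)).exists
  exact hlt.not_ge (hle t ⟨ht.1.le, ht.2.le⟩)

/-- in the partition scenario (the coherent set is the probability simplex),
the minimizer `p*` of `Σ f(p_i, q_i)` has log-odds differing from those of `q` by a
constant: `ln(p*_i/(1−p*_i)) − ln(q_i/(1−q_i))` is independent of `i`, when all
`q_i ∈ (0,1)`. -/
theorem binKL_partition_minimizer_logodds_shift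
    {n : ℕ} (q : Fin n → ℝ) (hq : ∀ i, q i ∈ Set.Ioo (0:ℝ) 1)
    (C : Set (Fin n → ℝ))
    (hC : C = {p | (∀ i, 0 ≤ p i) ∧ (∑ i, p i) = 1})
    (pstar : Fin n → ℝ) (hmem : pstar ∈ C)
    (hmin : IsMinOn (fun p : Fin n → ℝ => ∑ i, binKL (p i) (q i)) C pstar) :
    ∀ i i' : Fin n,
      Real.log (pstar i / (1 - pstar i)) - Real.log (q i / (1 - q i)) =
        Real.log (pstar i' / (1 - pstar i')) - Real.log (q i' / (1 - q i')) := by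
  intro i i'
  obtain rfl | hii' := eq_or_ne i i'
  · rfl
  obtain rfl : C = stdSimplex ℝ (Fin n) := hC
  have hpos := pos_of_isMinOn_sum_binKL hq hmin hmem
  have hsum : pstar i + pstar i' ≤ 1 := hmem.2 ▸
    Finset.add_le_sum (fun k _ => hmem.1 k) (Finset.mem_univ _) (Finset.mem_univ _) hii'
  have hlocal :
      IsLocalMin (fun t => binKL (pstar i + t) (q i) + binKL (pstar i' - t) (q i')) 0 := by
    filter_upwards [Ioo_mem_nhds (neg_lt_zero.2 (hpos i)) (hpos i')] with t ht
    simpa using hmin.add_le_add_of_transfer (F := fun k x => binKL x (q k)) hmem hii'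
      (by linarith [ht.1]) (by linarith [ht.2])
  have hf : HasDerivAt (fun x => binKL x (q i))
      (log (pstar i / (1 - pstar i)) - log (q i / (1 - q i))) (pstar i + 0) := by
    rw [add_zero]
    exact hasDerivAt_binKL_left (hpos i).ne' (by linarith [hpos i']) (hq i).1.ne' (hq i).2.ne
  have hg : HasDerivAt (fun x => binKL x (q i'))
      (log (pstar i' / (1 - pstar i')) - log (q i' / (1 - q i'))) (pstar i' - 0) := by
    rw [sub_zero]
    exact hasDerivAt_binKL_left (hpos i').ne' (by linarith [hpos i]) (hq i').1.ne' (hq i').2.ne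
  simpa [sub_eq_zero] using hlocal.hasDerivAt_eq_zero (hf.add_comp_transfer hg)
end

section
/- For the repetition scenario where all n estimates q_1,...,q_n ∈ (0,1) concern the same event, the coherent minimizer of Σ_i f(p, q_i) over p ∈ [0,1], with f(p,q) = p ln(p/q) + (1−p) ln((1−p)/(1−q)), is the unique p* satisfying p*/(1−p*) = (Π_i q_i/(1−q_i))^{1/n}. -/
/-!
The objective is a sum of Bregman divergences, so it obeys the three-point identity
`f(p, r) + f(r, q) = f(p, q) + (p - r) (logit q - logit r)`. Taking for `r` the point whose
log-odds is the mean of the log-odds of the `q i`, the correction terms cancel in the sum and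
`∑ f(p, q i) = n f(p, r) + ∑ f(r, q i)`. Since `f(p, r) ≥ 0` with equality only at `p = r`
(Gibbs), `r` is the unique minimizer, and its odds are the geometric mean of the odds of the `q i`.
-/

open scoped BigOperators

open Real InformationTheory Finset

section BinKL

variable {p q r : ℝ}

lemma binKL_eq_klFun (hq : q ∈ Set.Ioo (0:ℝ) 1) :
    binKL p q = q * klFun (p / q) + (1 - q) * klFun ((1 - p) / (1 - q)) := by
  have hq0 : q ≠ 0 := hq.1.ne'
  have hq1 : 1 - q ≠ 0 := by linarith [hq.2]
  simp only [binKL, klFun_apply]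
  field_simp
  ring

lemma binKL_nonneg (hq : q ∈ Set.Ioo (0:ℝ) 1) (hp : p ∈ Set.Icc (0:ℝ) 1) : 0 ≤ binKL p q := by
  have hq1 : 0 < 1 - q := by linarith [hq.2]
  rw [binKL_eq_klFun hq]
  exact add_nonneg (mul_nonneg hq.1.le (klFun_nonneg (div_nonneg hp.1 hq.1.le)))
    (mul_nonneg hq1.le (klFun_nonneg (div_nonneg (by linarith [hp.2]) hq1.le)))

lemma binKL_eq_zero_iff (hq : q ∈ Set.Ioo (0:ℝ) 1) (hp : p ∈ Set.Icc (0:ℝ) 1) :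
    binKL p q = 0 ↔ p = q := by
  refine ⟨fun h => ?_, fun h => by
    simp [h, binKL_eq_klFun hq, hq.1.ne', (sub_pos.2 hq.2).ne', klFun_one]⟩
  have hq1 : 0 < 1 - q := by linarith [hq.2]
  have hp0 : 0 ≤ p / q := div_nonneg hp.1 hq.1.le
  have hp1 : 0 ≤ (1 - p) / (1 - q) := div_nonneg (by linarith [hp.2]) hq1.le
  rw [binKL_eq_klFun hq] at h
  have hklFun : q * klFun (p / q) = 0 := by
    linarith [mul_nonneg hq.1.le (klFun_nonneg hp0), mul_nonneg hq1.le (klFun_nonneg hp1)]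
  have hratio : p / q = 1 :=
    (klFun_eq_zero_iff hp0).1 ((mul_eq_zero.1 hklFun).resolve_left hq.1.ne')
  exact (div_eq_one_iff_eq hq.1.ne').1 hratio

lemma mul_log_div {x y : ℝ} (hy : y ≠ 0) : x * log (x / y) = x * log x - x * log y := by
  rcases eq_or_ne x 0 with rfl | hx
  · simp
  · rw [log_div hx hy, mul_sub]

lemma binKL_eq_sub (hq : q ∈ Set.Ioo (0:ℝ) 1) :
    binKL p q = p * log p + (1 - p) * log (1 - p) - (p * log q + (1 - p) * log (1 - q)) := by
  rw [binKL, mul_log_div hq.1.ne', mul_log_div (sub_pos.2 hq.2).ne']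
  ring

lemma binKL_add_binKL (hq : q ∈ Set.Ioo (0:ℝ) 1) (hr : r ∈ Set.Ioo (0:ℝ) 1) :
    binKL p r + binKL r q = binKL p q + (p - r) * (log (q / (1 - q)) - log (r / (1 - r))) := by
  rw [binKL_eq_sub hq, binKL_eq_sub hq, binKL_eq_sub hr, log_div hq.1.ne' (sub_pos.2 hq.2).ne',
    log_div hr.1.ne' (sub_pos.2 hr.2).ne']
  ring

lemma sum_binKL_eq_card_mul_binKL_add {ι : Type*} [Fintype ι] {q : ι → ℝ}
    (hq : ∀ i, q i ∈ Set.Ioo (0:ℝ) 1) (hr : r ∈ Set.Ioo (0:ℝ) 1)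
    (hlogOdds : ∑ i, log (q i / (1 - q i)) = Fintype.card ι * log (r / (1 - r))) (p : ℝ) :
    ∑ i, binKL p (q i) = Fintype.card ι * binKL p r + ∑ i, binKL r (q i) := by
  have h := sum_congr rfl fun i (_ : i ∈ univ) => binKL_add_binKL (p := p) (hq i) hr
  rw [sum_add_distrib, sum_add_distrib, ← mul_sum, sum_sub_distrib, hlogOdds] at h
  simpa using h.symm

end BinKL

lemma div_one_add_mem_Ioo {x : ℝ} (hx : 0 < x) : x / (1 + x) ∈ Set.Ioo (0:ℝ) 1 :=
  ⟨by positivity, (div_lt_one (by positivity)).2 (by linarith)⟩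

lemma div_one_add_div_one_sub {x : ℝ} (hx : 0 < x) : x / (1 + x) / (1 - x / (1 + x)) = x := by
  have : 1 + x ≠ 0 := by positivity
  field_simp
  ring

/-- in the repetition scenario (all estimates `q_i ∈ (0,1)` concern the same
event), the minimizer over `p ∈ [0,1]` of `Σ f(p, q_i)` satisfies
`p*/(1−p*) = (Π q_i/(1−q_i))^{1/n}`. -/
theorem binKL_repetition_minimizer_geometric_mean_odds
    {n : ℕ} (hn : 0 < n) (q : Fin n → ℝ) (hq : ∀ i, q i ∈ Set.Ioo (0:ℝ) 1)
    (pstar : ℝ) (hmem : pstar ∈ Set.Icc (0:ℝ) 1)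
    (hmin : IsMinOn (fun p : ℝ => ∑ i, binKL p (q i)) (Set.Icc (0:ℝ) 1) pstar) :
    pstar / (1 - pstar) = (∏ i, q i / (1 - q i)) ^ ((n : ℝ)⁻¹) := by
  have hodds : ∀ i, 0 < q i / (1 - q i) := fun i => div_pos (hq i).1 (sub_pos.2 (hq i).2)
  have hprod : 0 < ∏ i, q i / (1 - q i) := prod_pos fun i _ => hodds i
  set G := (∏ i, q i / (1 - q i)) ^ ((n : ℝ)⁻¹)
  have hG : 0 < G := rpow_pos_of_pos hprod _
  set r := G / (1 + G)
  have hr : r ∈ Set.Ioo (0:ℝ) 1 := div_one_add_mem_Ioo hG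
  have hlogOdds : ∑ i, log (q i / (1 - q i)) = Fintype.card (Fin n) * log (r / (1 - r)) := by
    have hn' : (n : ℝ) ≠ 0 := by positivity
    rw [div_one_add_div_one_sub hG, log_rpow hprod, log_prod fun i _ => (hodds i).ne',
      Fintype.card_fin, mul_inv_cancel_left₀ hn']
  have hsplit := sum_binKL_eq_card_mul_binKL_add hq hr hlogOdds
  have hle : ∑ i, binKL pstar (q i) ≤ ∑ i, binKL r (q i) := hmin ⟨hr.1.le, hr.2.le⟩
  have hnonpos : binKL pstar r ≤ 0 := by
    rw [hsplit, Fintype.card_fin] at hle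
    exact nonpos_of_mul_nonpos_right (by linarith) (Nat.cast_pos.2 hn)
  rw [(binKL_eq_zero_iff hr hmem).1 (le_antisymm hnonpos (binKL_nonneg hr hmem)),
    div_one_add_div_one_sub hG]
end

section
/- Let V̄ and V̄' be the row-augmented event matrices of two content equivalent coherent credence bases (V, q) and (V', q'), i.e., rowspan(V̄) = rowspan(V̄') and the concatenated base ((V,V'), (q,q')) is coherent. Then for any probability vector π, Vπ = q if and only if V'π = q'. -/
open scoped BigOperators

private lemma aux_transfer {n n' N : ℕ} (V : Fin n → Fin N → ℝ) (V' : Fin n' → Fin N → ℝ)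
    (q : Fin n → ℝ) (q' : Fin n' → ℝ)
    (hle : Submodule.span ℝ (Set.range (Fin.cons (fun _ => (1:ℝ)) V'))
      ≤ Submodule.span ℝ (Set.range (Fin.cons (fun _ => (1:ℝ)) V)))
    (π₀ : Fin N → ℝ) (hπ₀sum : (∑ j, π₀ j) = 1)
    (hπ₀V : ∀ i, (∑ j, V i j * π₀ j) = q i)
    (hπ₀V' : ∀ i, (∑ j, V' i j * π₀ j) = q' i)
    (π : Fin N → ℝ) (hsum : (∑ j, π j) = 1)
    (hVπ : ∀ i, (∑ j, V i j * π j) = q i) :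
    ∀ i, (∑ j, V' i j * π j) = q' i := by
  let φ : (Fin N → ℝ) →ₗ[ℝ] ℝ :=
    { toFun := fun w => ∑ j, w j * (π j - π₀ j)
      map_add' := by
        intro x y
        simp [add_mul, Finset.sum_add_distrib]
      map_smul' := by
        intro c x
        simp [Finset.mul_sum, mul_assoc] }
  have hker : Submodule.span ℝ (Set.range (Fin.cons (fun _ => (1:ℝ)) V)) ≤ LinearMap.ker φ := by
    rw [Submodule.span_le]
    rintro _ ⟨i, rfl⟩
    refine Fin.cases ?_ ?_ i
    · simp only [LinearMap.mem_ker, SetLike.mem_coe, Fin.cons_zero]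
      show (∑ j, (1:ℝ) * (π j - π₀ j)) = 0
      simp [Finset.sum_sub_distrib, hsum, hπ₀sum]
    · intro k
      simp only [LinearMap.mem_ker, SetLike.mem_coe, Fin.cons_succ]
      show (∑ j, V k j * (π j - π₀ j)) = 0
      have : (∑ j, V k j * (π j - π₀ j)) = (∑ j, V k j * π j) - (∑ j, V k j * π₀ j) := by
        simp [mul_sub, Finset.sum_sub_distrib]
      rw [this, hVπ k, hπ₀V k, sub_self]
  intro i
  have hmem : V' i ∈ LinearMap.ker φ := by
    apply hker
    apply hle
    apply Submodule.subset_span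
    exact ⟨i.succ, by simp⟩
  have h0 : (∑ j, V' i j * (π j - π₀ j)) = 0 := hmem
  have : (∑ j, V' i j * π j) - (∑ j, V' i j * π₀ j) = 0 := by
    rw [← h0]; simp [mul_sub, Finset.sum_sub_distrib]
  have := sub_eq_zero.mp this
  rw [this, hπ₀V' i]

/-- if `(V, q)` and `(V', q')` are content equivalent coherent credence bases
(the row spans of the augmented matrices agree and the concatenated base is coherent), then
a probability vector `π` satisfies `Vπ = q` iff it satisfies `V'π = q'`. -/
theorem content_equivalent_same_certificates
    {n n' N : ℕ} (V : Fin n → Fin N → ℝ) (V' : Fin n' → Fin N → ℝ)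
    (hV : ∀ i j, V i j = 0 ∨ V i j = 1) (hV' : ∀ i j, V' i j = 0 ∨ V' i j = 1)
    (q : Fin n → ℝ) (q' : Fin n' → ℝ)
    (hq : ∀ i, q i ∈ Set.Icc (0:ℝ) 1) (hq' : ∀ i, q' i ∈ Set.Icc (0:ℝ) 1)
    (hspan : Submodule.span ℝ (Set.range (Fin.cons (fun _ => (1:ℝ)) V))
      = Submodule.span ℝ (Set.range (Fin.cons (fun _ => (1:ℝ)) V')))
    (hconcat : ∃ π : Fin N → ℝ, (∀ j, 0 ≤ π j) ∧ (∑ j, π j) = 1 ∧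
      (∀ i, (∑ j, V i j * π j) = q i) ∧ (∀ i, (∑ j, V' i j * π j) = q' i)) :
    ∀ π : Fin N → ℝ, (∀ j, 0 ≤ π j) → (∑ j, π j) = 1 →
      ((∀ i, (∑ j, V i j * π j) = q i) ↔ (∀ i, (∑ j, V' i j * π j) = q' i)) := by
  obtain ⟨π₀, _, hπ₀sum, hπ₀V, hπ₀V'⟩ := hconcat
  intro π _ hsum
  constructor
  · exact aux_transfer V V' q q' hspan.ge π₀ hπ₀sum hπ₀V hπ₀V' π hsum
  · exact aux_transfer V' V q' q hspan.le π₀ hπ₀sum hπ₀V' hπ₀V π hsum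
end

section
/- Let V̄ be the row-augmented event matrix (full row rank n+1) of a coherent credence base (V, q), and let I = rowspan(V̄) ∩ {0,1}^N be the set of linearly inferable events. If R is the reduced row-echelon form of V̄, then I = {R^T v : v ∈ {0,1}^{n+1} and R^T v ∈ {0,1}^N}. Consequently |I| ≤ 2^{n+1}. -/
open scoped BigOperators

/-- let `V̄` be the augmented event matrix (full row rank) of a coherent
credence base and `I = rowspan(V̄) ∩ {0,1}^N` the set of linearly inferable events. If `R`
is the reduced row-echelon form of `V̄` (same row span, with pivot columns), then
`I = {Rᵀ v : v ∈ {0,1}^{n+1}, Rᵀ v ∈ {0,1}^N}`, and consequently `|I| ≤ 2^{n+1}`. -/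
theorem inferable_events_eq_rref_image
    {n N : ℕ} (V : Fin n → Fin N → ℝ)
    (hV : ∀ i j, V i j = 0 ∨ V i j = 1)
    (q : Fin n → ℝ) (hq : ∀ i, q i ∈ Set.Icc (0:ℝ) 1) (hcoh : Coherent V q)
    (Vbar : Fin (n + 1) → Fin N → ℝ) (hVbar : Vbar = Fin.cons (fun _ => (1:ℝ)) V)
    (hrank : LinearIndependent ℝ Vbar)
    (R : Fin (n + 1) → Fin N → ℝ)
    -- `R` has the same row span as `V̄` and is in reduced row-echelon form:
    (hspan : Submodule.span ℝ (Set.range R) = Submodule.span ℝ (Set.range Vbar))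
    (pivot : Fin (n + 1) → Fin N) (hpiv_mono : StrictMono pivot)
    (hpiv_one : ∀ i, R i (pivot i) = 1)
    (hpiv_col : ∀ i i', i' ≠ i → R i' (pivot i) = 0)
    (hpiv_lead : ∀ i j, j < pivot i → R i j = 0)
    (I : Set (Fin N → ℝ))
    (hI : I = {x | x ∈ Submodule.span ℝ (Set.range Vbar) ∧ ∀ j, x j = 0 ∨ x j = 1}) :
    I = {x | (∀ j, x j = 0 ∨ x j = 1) ∧
        ∃ v : Fin (n + 1) → ℝ, (∀ i, v i = 0 ∨ v i = 1) ∧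
          x = fun j => ∑ i, R i j * v i} ∧
      I.ncard ≤ 2 ^ (n + 1) := by
  have key : I = {x | (∀ j, x j = 0 ∨ x j = 1) ∧
      ∃ v : Fin (n + 1) → ℝ, (∀ i, v i = 0 ∨ v i = 1) ∧
        x = fun j => ∑ i, R i j * v i} := by
    rw [hI]
    ext x
    simp only [Set.mem_setOf_eq]
    constructor
    · rintro ⟨hx, h01⟩
      refine ⟨h01, ?_⟩
      rw [← hspan] at hx
      obtain ⟨c, hc⟩ := (Submodule.mem_span_range_iff_exists_fun ℝ).mp hx
      have hcj : ∀ j, x j = ∑ i, c i * R i j := by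
        intro j
        rw [← hc]
        simp [Finset.sum_apply]
      have hcx : ∀ i, c i = x (pivot i) := by
        intro i
        rw [hcj (pivot i)]
        rw [Finset.sum_eq_single i]
        · rw [hpiv_one i, mul_one]
        · intro i' _ hne
          rw [hpiv_col i i' hne, mul_zero]
        · simp
      refine ⟨c, fun i => by rw [hcx i]; exact h01 _, ?_⟩
      funext j
      rw [hcj j]
      exact Finset.sum_congr rfl (fun i _ => mul_comm _ _)
    · rintro ⟨h01, v, hv01, hx⟩
      refine ⟨?_, h01⟩
      rw [← hspan, hx]
      have : (fun j => ∑ i, R i j * v i) = ∑ i, v i • R i := by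
        funext j
        simp [Finset.sum_apply, mul_comm]
      rw [this]
      exact Submodule.sum_mem _ fun i _ =>
        Submodule.smul_mem _ _ (Submodule.subset_span ⟨i, rfl⟩)
  refine ⟨key, ?_⟩
  -- cardinality bound
  set f : (Fin (n + 1) → Bool) → (Fin N → ℝ) :=
    fun b j => ∑ i, R i j * (if b i then 1 else 0) with hf
  have hsub : I ⊆ Set.range f := by
    intro x hx
    rw [key] at hx
    obtain ⟨h01, v, hv01, hx⟩ := hx
    refine ⟨fun i => v i = 1, ?_⟩
    rw [hx]
    funext j
    refine Finset.sum_congr rfl fun i _ => ?_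
    rcases hv01 i with h | h <;> simp [hf, h]
  calc I.ncard ≤ (Set.range f).ncard := Set.ncard_le_ncard hsub (Set.finite_range f)
    _ = (f '' Set.univ).ncard := by rw [Set.image_univ]
    _ ≤ (Set.univ : Set (Fin (n + 1) → Bool)).ncard := Set.ncard_image_le Set.finite_univ
    _ = 2 ^ (n + 1) := by simp [Set.ncard_univ, Nat.card_eq_fintype_card]
end

section
/- Let I = rowspan(V̄) ∩ {0,1}^N for a full-row-rank matrix V̄ (with a row of all ones). Then the set of maximally-zero elements of I is the unique minimal positive spanning set of I: it is a positive spanning set of I, and it is contained in every positive spanning set B ⊆ I of I. -/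
open scoped BigOperators

/-- let `I = rowspan(V̄) ∩ {0,1}^N` for a full-row-rank `V̄` one of whose rows
is all ones. The set of maximally-zero elements of `I` (nonzero `v ∈ I` such that no
nonzero `w ∈ I` has a zero set strictly containing that of `v`) is the unique minimal
positive spanning set of `I`: it positively spans `I` and is contained in every positive
spanning set `B ⊆ I` of `I`. -/
theorem maximallyZero_is_minimal_pos_spanning
    {m N : ℕ} (Vbar : Fin m → Fin N → ℝ)
    (hrank : LinearIndependent ℝ Vbar)
    (hones : ∃ i, ∀ j, Vbar i j = 1)
    (I : Set (Fin N → ℝ))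
    (hI : I = {x | x ∈ Submodule.span ℝ (Set.range Vbar) ∧ ∀ j, x j = 0 ∨ x j = 1})
    (B : Set (Fin N → ℝ))
    (hB : B = {v ∈ I | v ≠ 0 ∧
      ¬ ∃ w ∈ I, w ≠ 0 ∧ {j | v j = 0} ⊂ {j | w j = 0}}) :
    IsPosSpanning B I ∧ ∀ B' ⊆ I, IsPosSpanning B' I → B ⊆ B' := by
  classical
  have hBsub : B ⊆ I := by
    subst hB; intro v hv; exact hv.1
  constructor
  · refine ⟨hBsub, ?_⟩
    -- strong induction on support size
    have main : ∀ n : ℕ, ∀ s ∈ I,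
        (Finset.univ.filter (fun j => s j ≠ 0)).card ≤ n →
        ∃ (m : ℕ) (c : Fin m → ℝ) (b : Fin m → (Fin N → ℝ)),
          (∀ k, b k ∈ B) ∧ (∀ k, 0 ≤ c k) ∧ s = ∑ k, c k • b k := by
      intro n
      induction n using Nat.strong_induction_on with
      | _ n ih =>
        intro s hs hcard
        by_cases hs0 : s = 0
        · exact ⟨0, fun k => 0, fun k => 0, fun k => k.elim0, fun k => k.elim0,
            by simp [hs0]⟩
        by_cases hsB : s ∈ B
        · exact ⟨1, fun _ => 1, fun _ => s, fun _ => hsB, fun _ => zero_le_one,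
            by simp⟩
        -- s not maximally zero: get w
        have hw : ∃ w ∈ I, w ≠ 0 ∧ {j | s j = 0} ⊂ {j | w j = 0} := by
          by_contra h
          exact hsB (by rw [hB]; exact ⟨hs, hs0, h⟩)
        obtain ⟨w, hwI, hw0, hss⟩ := hw
        have hsI := hs
        rw [hI] at hsI hwI
        obtain ⟨hsSpan, hs01⟩ := hsI
        obtain ⟨hwSpan, hw01⟩ := hwI
        -- zero set inclusion: s j = 0 → w j = 0
        have hZ : ∀ j, s j = 0 → w j = 0 := fun j hj => hss.1 hj
        -- s - w ∈ I
        have hd01 : ∀ j, (s - w) j = 0 ∨ (s - w) j = 1 := by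
          intro j
          rcases hw01 j with h0 | h1
          · simp only [Pi.sub_apply, h0, sub_zero]; exact hs01 j
          · have hsj : s j = 1 := by
              rcases hs01 j with h | h
              · exfalso; rw [hZ j h] at h1; norm_num at h1
              · exact h
            left; simp [Pi.sub_apply, h1, hsj]
        have hdI : (s - w) ∈ I := by
          rw [hI]; exact ⟨Submodule.sub_mem _ hsSpan hwSpan, hd01⟩
        have hwI' : w ∈ I := by rw [hI]; exact ⟨hwSpan, hw01⟩
        -- support cards
        have hsupp_w : (Finset.univ.filter (fun j => w j ≠ 0)) ⊂
            (Finset.univ.filter (fun j => s j ≠ 0)) := by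
          rw [Finset.ssubset_iff_of_subset]
          · obtain ⟨j, hjw, hjs⟩ := Set.exists_of_ssubset hss
            simp only [Set.mem_setOf_eq] at hjw hjs
            exact ⟨j, by simp [hjs], by simp [hjw]⟩
          · intro j hj
            simp only [Finset.mem_filter, Finset.mem_univ, true_and] at hj ⊢
            exact fun h => hj (hZ j h)
        have hsupp_d : (Finset.univ.filter (fun j => (s - w) j ≠ 0)) ⊂
            (Finset.univ.filter (fun j => s j ≠ 0)) := by
          rw [Finset.ssubset_iff_of_subset]
          · obtain ⟨j, hjw⟩ : ∃ j, w j ≠ 0 := by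
              by_contra h; push_neg at h; exact hw0 (funext h)
            have hjs : s j ≠ 0 := fun h => hjw (hZ j h)
            have hj1 : w j = 1 := (hw01 j).resolve_left hjw
            have hs1 : s j = 1 := (hs01 j).resolve_left hjs
            refine ⟨j, by simp [hjs], by simp [Pi.sub_apply, hj1, hs1]⟩
          · intro j hj
            simp only [Finset.mem_filter, Finset.mem_univ, true_and, Pi.sub_apply] at hj ⊢
            intro h
            exact hj (by rw [h, hZ j h, sub_zero])
        have h1 : (Finset.univ.filter (fun j => w j ≠ 0)).card < n :=
          lt_of_lt_of_le (Finset.card_lt_card hsupp_w) hcard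
        have h2 : (Finset.univ.filter (fun j => (s - w) j ≠ 0)).card < n :=
          lt_of_lt_of_le (Finset.card_lt_card hsupp_d) hcard
        obtain ⟨m1, c1, b1, hb1, hc1, heq1⟩ := ih _ h1 w hwI' le_rfl
        obtain ⟨m2, c2, b2, hb2, hc2, heq2⟩ := ih _ h2 (s - w) hdI le_rfl
        refine ⟨m1 + m2, Fin.append c1 c2, Fin.append b1 b2, ?_, ?_, ?_⟩
        · intro k
          refine Fin.addCases (fun i => ?_) (fun i => ?_) k
          · simpa [Fin.append_left] using hb1 i
          · simpa [Fin.append_right] using hb2 i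
        · intro k
          refine Fin.addCases (fun i => ?_) (fun i => ?_) k
          · simpa [Fin.append_left] using hc1 i
          · simpa [Fin.append_right] using hc2 i
        · rw [Fin.sum_univ_add]
          simp only [Fin.append_left, Fin.append_right]
          rw [← heq1, ← heq2]
          abel
    intro s hs
    exact main _ s hs le_rfl
  · intro B' hB'I hB'span v hv
    have hvB := hv
    rw [hB] at hvB
    obtain ⟨hvI, hv0, hvmax⟩ := hvB
    obtain ⟨_, hspan⟩ := hB'span
    obtain ⟨m', c, b, hb, hc, heq⟩ := hspan v hvI
    -- find k with c k • b k ≠ 0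
    have hex : ∃ k, c k • b k ≠ 0 := by
      by_contra h; push_neg at h
      exact hv0 (by rw [heq]; exact Finset.sum_eq_zero fun k _ => h k)
    obtain ⟨k, hk⟩ := hex
    have hck : c k ≠ 0 := fun h => hk (by simp [h])
    have hbk0 : b k ≠ 0 := fun h => hk (by simp [h])
    have hbkI : b k ∈ I := hB'I (hb k)
    have hbkI' := hbkI
    rw [hI] at hbkI' hvI
    have hb01 : ∀ i j, 0 ≤ b i j := by
      intro i j
      have := (hB'I (hb i))
      rw [hI] at this
      rcases this.2 j with h | h <;> rw [h] <;> norm_num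
    -- zero set of v ⊆ zero set of b k
    have hZsub : {j | v j = 0} ⊆ {j | b k j = 0} := by
      intro j hj
      simp only [Set.mem_setOf_eq] at hj ⊢
      have hsum : ∑ i, c i • b i j = 0 := by
        have := congrFun heq j
        simp only [Finset.sum_apply, Pi.smul_apply, smul_eq_mul] at this ⊢
        rw [← this, hj]
      have hterm : ∀ i ∈ Finset.univ, c i • b i j = 0 := by
        rw [← Finset.sum_eq_zero_iff_of_nonneg]
        · exact hsum
        · intro i _
          exact smul_nonneg (hc i) (hb01 i j)
      have := hterm k (Finset.mem_univ k)
      simp only [smul_eq_mul, mul_eq_zero] at this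
      exact this.resolve_left hck
    have hnot : ¬ {j | v j = 0} ⊂ {j | b k j = 0} := by
      intro h
      exact hvmax ⟨b k, hbkI, hbk0, h⟩
    have hZeq : {j | v j = 0} = {j | b k j = 0} :=
      hZsub.antisymm (fun j hj => by
        by_contra hc'
        exact hnot ⟨hZsub, fun hs => hc' (hs hj)⟩)
    have hveq : v = b k := by
      funext j
      rcases hvI.2 j with h0 | h1
      · rw [h0]
        have : j ∈ {j | b k j = 0} := hZeq ▸ (h0 : v j = 0)
        exact this.symm
      · rw [h1]
        rcases hbkI'.2 j with h0' | h1'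
        · exfalso
          have : j ∈ {j | v j = 0} := hZeq.symm ▸ (h0' : b k j = 0)
          simp only [Set.mem_setOf_eq] at this
          rw [h1] at this; norm_num at this
        · rw [h1']
    rw [hveq]; exact hb k
end
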